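/- arXiv:2209.04373 — 4 statements merged into one kernel-verified Lean document; each statement's English description precedes it below -/
import Mathlib

section
/- For vectors x, y in ℝ^n, x is weakly supermajorized by y if and only if there exists u in ℝ^n with u majorized by y and u ≤ x componentwise. -/
open Finset

/-- Nondecreasing rearrangement of a finite vector. -/
def sortAsc {n : ℕ} {α : Type*} [LinearOrder α] (x : Fin n → α) : Fin n → α :=
  x ∘ Tuple.sort x

/-- Nonincreasing rearrangement of a finite vector. -/
def sortDesc {n : ℕ} {α : Type*} [LinearOrder α] (x : Fin n → α) : Fin n → α :=
  fun i => sortAsc x i.rev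

/-- Sum of the entries of `f` at positions `< k`. -/
def psum {n : ℕ} {α : Type*} [AddCommMonoid α] (f : Fin n → α) (k : ℕ) : α :=
  ∑ i : Fin n, if (i : ℕ) < k then f i else 0

/-- `x` is majorized by `y`: every partial sum of the `k` largest entries of `x`
is at most that of `y`, and the total sums agree. -/
def Maj {n : ℕ} {α : Type*} [AddCommMonoid α] [LinearOrder α] [IsOrderedAddMonoid α] (x y : Fin n → α) : Prop :=
  (∀ k : ℕ, psum (sortDesc x) k ≤ psum (sortDesc y) k) ∧ (∑ i, x i) = ∑ i, y i

/-- Weak submajorization: the sum of the `k` largest entries of `x` is at most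
that of `y`, for every `k`. -/
def WeakSub {n : ℕ} {α : Type*} [AddCommMonoid α] [LinearOrder α] [IsOrderedAddMonoid α] (x y : Fin n → α) : Prop :=
  ∀ k : ℕ, psum (sortDesc x) k ≤ psum (sortDesc y) k

/-- Weak supermajorization: the sum of the `k` smallest entries of `x` is at least
that of `y`, for every `k`. -/
def WeakSuper {n : ℕ} {α : Type*} [AddCommMonoid α] [LinearOrder α] [IsOrderedAddMonoid α] (x y : Fin n → α) : Prop :=
  ∀ k : ℕ, psum (sortAsc y) k ≤ psum (sortAsc x) k

/-! Sufficiency: if `u ≺ y` and `u ≤ x`, the `k` smallest entries of `x` sum to at least those of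
`u` (the `k` smallest entries of `u` minimise the sum over `k`-element index sets, by the
rearrangement inequality), hence to at least those of `y`.

Necessity: truncate `x` at a level `t`, `u = min x t`, where `t` is chosen by the intermediate value
theorem so that `∑ u = ∑ y`. Then `u ≤ x`, and the sums of the `m` smallest entries of `u` still
dominate those of `y`: if the `m` smallest entries of `y` all lie below `t`, compare them with `x`
up to the truncation threshold and with `t` beyond it; otherwise all remaining entries of `y` exceed
`t ≥ u`, and equality of the totals transfers the comparison of the tails. Finally, `u ≺ y` is
the same as `u ≺^w y` together with `∑ u = ∑ y`, by passing to complementary index sets. -/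

variable {n : ℕ} {α : Type*}

section AddCommMonoid
variable [AddCommMonoid α]

lemma psum_of_le (f : Fin n → α) {k : ℕ} (hk : n ≤ k) : psum f k = ∑ i, f i :=
  sum_congr rfl fun i _ => if_pos (i.2.trans_le hk)

lemma psum_add_sum_ite_not_lt (f : Fin n → α) (k : ℕ) :
    psum f k + ∑ i : Fin n, (if (i : ℕ) < k then 0 else f i) = ∑ i, f i := by
  rw [psum, ← sum_add_distrib]
  exact sum_congr rfl fun i _ => by split_ifs <;> simp

lemma psum_rev_add_psum (g : Fin n → α) (k : ℕ) :
    psum (fun i => g i.rev) k + psum g (n - k) = ∑ i, g i := by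
  have hrev : psum (fun i => g i.rev) k = ∑ i : Fin n, (if (i : ℕ) < n - k then 0 else g i) := by
    rw [psum, ← Equiv.sum_comp Fin.revPerm]
    refine sum_congr rfl fun i _ => ?_
    simp only [Fin.revPerm_apply, Fin.rev_rev, Fin.val_rev]
    split_ifs <;> first | rfl | omega
  rw [hrev, add_comm, psum_add_sum_ite_not_lt]

lemma psum_eq_sum_nsmul (f : Fin n → α) (k : ℕ) :
    psum f k = ∑ i : Fin n, (if (i : ℕ) < k then 1 else 0 : ℕ) • f i := by
  simp only [psum, ite_smul, one_smul, zero_smul]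

end AddCommMonoid

section Rearrangement
variable [LinearOrder α]

lemma sortAsc_comp_of_monotone {β : Type*} [LinearOrder β] {g : α → β} (hg : Monotone g)
    (x : Fin n → α) : sortAsc (g ∘ x) = g ∘ sortAsc x :=
  (Tuple.comp_sort_eq_comp_iff_monotone.2 (hg.comp (Tuple.monotone_sort x))).symm

lemma sum_sortAsc [AddCommMonoid α] (x : Fin n → α) : ∑ i, sortAsc x i = ∑ i, x i :=
  Equiv.sum_comp (Tuple.sort x) x

lemma psum_sortDesc_add_psum_sortAsc [AddCommMonoid α] (x : Fin n → α) (k : ℕ) :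
    psum (sortDesc x) k + psum (sortAsc x) (n - k) = ∑ i, x i := by
  rw [← sum_sortAsc]
  exact psum_rev_add_psum (sortAsc x) k

lemma Monotone.exists_min_eq_ite {a : Fin n → α} (ha : Monotone a) (t : α) :
    ∃ j : ℕ, ∀ i : Fin n, min (a i) t = if (i : ℕ) < j then a i else t := by
  classical
  have hex : ∃ j : ℕ, ∀ i : Fin n, j ≤ i → t < a i := ⟨n, fun i hi => absurd i.2 (by omega)⟩
  refine ⟨Nat.find hex, fun i => ?_⟩
  split_ifs with hi
  · obtain ⟨i', hii', hi'⟩ : ∃ i' : Fin n, (i : ℕ) ≤ i' ∧ a i' ≤ t := by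
      simpa using Nat.find_min hex hi
    exact min_eq_left ((ha hii').trans hi')
  · exact min_eq_right (Nat.find_spec hex i (not_lt.1 hi)).le

end Rearrangement

section OrderedCancelAddCommMonoid
variable [AddCommMonoid α] [LinearOrder α] [IsOrderedCancelAddMonoid α]

lemma psum_mono {f g : Fin n → α} (hfg : f ≤ g) (k : ℕ) : psum f k ≤ psum g k :=
  sum_le_sum fun i _ => by split_ifs; exacts [hfg i, le_rfl]

lemma psum_sortAsc_le_psum_comp_perm (x : Fin n → α) (σ : Equiv.Perm (Fin n)) (k : ℕ) :
    psum (sortAsc x) k ≤ psum (x ∘ σ) k := by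
  have hanti : Antivary (fun i : Fin n => (if (i : ℕ) < k then 1 else 0 : ℕ)) (sortAsc x) :=
    Antitone.antivary (fun i j hij => by
      have : (i : ℕ) ≤ j := hij
      split_ifs <;> omega) (Tuple.monotone_sort x)
  have h := hanti.sum_smul_le_sum_smul_comp_perm (σ := (Tuple.sort x).symm * σ)
  simpa only [← psum_eq_sum_nsmul, sortAsc, Equiv.Perm.mul_apply, Function.comp_def,
    Equiv.apply_symm_apply] using h

lemma psum_sortAsc_mono {u x : Fin n → α} (hux : u ≤ x) (k : ℕ) :
    psum (sortAsc u) k ≤ psum (sortAsc x) k :=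
  (psum_sortAsc_le_psum_comp_perm u (Tuple.sort x) k).trans (psum_mono (fun _ => hux _) k)

lemma WeakSuper.mono {x y u : Fin n → α} (h : WeakSuper u y) (hux : u ≤ x) : WeakSuper x y :=
  fun k => (h k).trans (psum_sortAsc_mono hux k)

lemma WeakSuper.sum_le {x y : Fin n → α} (h : WeakSuper x y) : ∑ i, y i ≤ ∑ i, x i := by
  simpa only [psum_of_le _ le_rfl, sum_sortAsc] using h n

end OrderedCancelAddCommMonoid

section OrderedAddCommGroup
variable [AddCommGroup α] [LinearOrder α] [IsOrderedAddMonoid α]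

lemma maj_iff_weakSuper_and_sum_eq (u y : Fin n → α) :
    Maj u y ↔ WeakSuper u y ∧ ∑ i, u i = ∑ i, y i := by
  have hasc (v : Fin n → α) (k : ℕ) := eq_sub_of_add_eq' (psum_sortDesc_add_psum_sortAsc v k)
  have hdesc (v : Fin n → α) (k : ℕ) := eq_sub_of_add_eq (psum_sortDesc_add_psum_sortAsc v k)
  refine ⟨fun ⟨h, hsum⟩ => ⟨fun m => ?_, hsum⟩, fun ⟨h, hsum⟩ => ⟨fun k => ?_, hsum⟩⟩
  · rcases le_or_gt m n with hm | hm
    · rw [← Nat.sub_sub_self hm, hasc, hasc, hsum]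
      exact sub_le_sub_left (h _) _
    · rw [psum_of_le _ hm.le, psum_of_le _ hm.le, sum_sortAsc, sum_sortAsc, hsum]
  · rw [hdesc, hdesc, hsum]
    exact sub_le_sub_left (h _) _

lemma psum_le_psum_min_of_sum_eq {a b : Fin n → α} (ha : Monotone a) (hb : Monotone b)
    (hab : ∀ k, psum b k ≤ psum a k) {t : α} (ht : ∑ i, min (a i) t = ∑ i, b i) (m : ℕ) :
    psum b m ≤ psum (fun i => min (a i) t) m := by
  by_cases hbt : ∀ i : Fin n, (i : ℕ) < m → b i ≤ t
  -- `min a t` agrees with `a` below the threshold `j` and with `t ≥ b` from `j` to `m`.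
  · obtain ⟨j, hj⟩ := ha.exists_min_eq_ite t
    calc psum b m = psum b (min j m)
            + ∑ i : Fin n, (if j ≤ (i : ℕ) ∧ (i : ℕ) < m then b i else 0) := by
          rw [psum, psum, ← sum_add_distrib]
          refine sum_congr rfl fun i _ => ?_
          split_ifs <;> first | omega | simp
      _ ≤ psum a (min j m) + ∑ i : Fin n, (if j ≤ (i : ℕ) ∧ (i : ℕ) < m then t else 0) :=
          add_le_add (hab _) (sum_le_sum fun i _ => by
            split_ifs with h; exacts [hbt i h.2, le_rfl])
      _ = psum (fun i => min (a i) t) m := by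
          rw [psum, psum, ← sum_add_distrib]
          refine sum_congr rfl fun i _ => ?_
          rw [hj]
          split_ifs <;> first | omega | simp
  -- Some `b i₀ > t` with `i₀ < m`, so the tail of `b` from `m` on dominates that of `min a t`,
  -- and the totals agree.
  · push Not at hbt
    obtain ⟨i₀, hi₀, hti₀⟩ := hbt
    have htail : ∑ i : Fin n, (if (i : ℕ) < m then 0 else min (a i) t)
        ≤ ∑ i : Fin n, (if (i : ℕ) < m then 0 else b i) :=
      sum_le_sum fun i _ => by
        split_ifs with hi
        · exact le_rfl
        · exact (min_le_right _ _).trans (hti₀.le.trans (hb (Fin.le_def.2 (by omega))))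
    refine le_of_add_le_add_right (a := ∑ i : Fin n, (if (i : ℕ) < m then 0 else b i)) ?_
    calc _ = ∑ i, b i := psum_add_sum_ite_not_lt b m
      _ = _ := (psum_add_sum_ite_not_lt (fun i => min (a i) t) m).trans ht |>.symm
      _ ≤ _ := by gcongr

lemma WeakSuper.min_of_sum_eq {x y : Fin n → α} (h : WeakSuper x y) {t : α}
    (ht : ∑ i, min (x i) t = ∑ i, y i) : WeakSuper (fun i => min (x i) t) y := by
  have hsort : sortAsc (fun i => min (x i) t) = fun i => min (sortAsc x i) t :=
    sortAsc_comp_of_monotone (g := fun s => min s t) (fun _ _ h => min_le_min_right t h) x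
  intro m
  rw [hsort]
  refine psum_le_psum_min_of_sum_eq (a := sortAsc x) (b := sortAsc y) (Tuple.monotone_sort x)
    (Tuple.monotone_sort y) h ?_ m
  rw [← hsort, sum_sortAsc, sum_sortAsc, ht]

end OrderedAddCommGroup

lemma exists_sum_min_eq (x : Fin n → ℝ) (hn : n ≠ 0) {s : ℝ} (hs : s ≤ ∑ i, x i) :
    ∃ t, ∑ i, min (x i) t = s := by
  obtain ⟨b, hb⟩ := (Set.finite_range x).bddAbove
  have hlow : ∑ i, min (x i) (s / n) ≤ s :=
    calc _ ≤ ∑ _i : Fin n, s / n := sum_le_sum fun i _ => min_le_right _ _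
      _ = s := by simp [mul_div_cancel₀, hn]
  have hhigh : s ≤ ∑ i, min (x i) b := by
    simpa only [min_eq_left (hb (Set.mem_range_self _))] using hs
  exact intermediate_value_univ (s / n) b (by fun_prop) ⟨hlow, hhigh⟩

theorem stmt_0 {n : ℕ} (x y : Fin n → ℝ) :
    WeakSuper x y ↔ ∃ u : Fin n → ℝ, Maj u y ∧ u ≤ x := by
  refine ⟨fun h => ?_, fun ⟨u, hu, hux⟩ => ((maj_iff_weakSuper_and_sum_eq u y).1 hu).1.mono hux⟩
  rcases eq_or_ne n 0 with rfl | hn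
  · exact ⟨x, (maj_iff_weakSuper_and_sum_eq x y).2 ⟨h, by simp⟩, le_rfl⟩
  obtain ⟨t, ht⟩ := exists_sum_min_eq x hn h.sum_le
  exact ⟨fun i => min (x i) t, (maj_iff_weakSuper_and_sum_eq _ y).2 ⟨h.min_of_sum_eq ht, ht⟩,
    fun i => min_le_left _ _⟩
end

section
/- For any x, y ∈ ℝ^n, the vector x↓ − y↓ is majorized by the vector x↓ − y, where subtraction is componentwise. -/
/-
Write `a = x↓` and `u = a - y`. Swapping an inversion of `y` (positions `i < j` with
`y i < y j`) replaces the pair `(u i, u j)` by `(a i - y j, a j - y i)`: the total is unchanged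
and both new entries are at most `u i`, because `a` is nonincreasing. Such a transfer cannot
increase the sum of the `k` largest entries. Bubble-sorting `y` into `y↓` by inversion swaps
therefore only decreases the top-`k` sums of `a - y`; the total sums agree since `y↓` is a
permutation of `y`.
-/

open Finset

open Equiv OrderDual

theorem Finset.sum_le_sum_of_card_eq_of_sdiff_le_of_le_sdiff {ι M : Type*} [DecidableEq ι]
    [AddCommMonoid M] [PartialOrder M] [IsOrderedAddMonoid M] {s r : Finset ι} {f : ι → M}
    (c : M) (hsr : #s = #r) (hs : ∀ x ∈ s \ r, f x ≤ c) (hr : ∀ x ∈ r \ s, c ≤ f x) :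
    ∑ x ∈ s, f x ≤ ∑ x ∈ r, f x :=
  calc ∑ x ∈ s, f x = ∑ x ∈ s ∩ r, f x + ∑ x ∈ s \ r, f x := (sum_inter_add_sum_sdiff s r f).symm
    _ ≤ ∑ x ∈ s ∩ r, f x + #(s \ r) • c := by gcongr; exact sum_le_card_nsmul _ _ _ hs
    _ = ∑ x ∈ r ∩ s, f x + #(r \ s) • c := by rw [inter_comm, card_sdiff_comm hsr]
    _ ≤ ∑ x ∈ r ∩ s, f x + ∑ x ∈ r \ s, f x := by gcongr; exact card_nsmul_le_sum _ _ _ hr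
    _ = ∑ x ∈ r, f x := sum_inter_add_sum_sdiff r s f

variable {n : ℕ} {α : Type*}

section Sorting

variable [LinearOrder α]

theorem sortDesc_eq_comp_perm (v : Fin n → α) :
    sortDesc v = v ∘ Fin.revPerm.trans (Tuple.sort v) :=
  rfl

theorem antitone_sortDesc (v : Fin n → α) : Antitone (sortDesc v) :=
  fun _ _ hij => Tuple.monotone_sort v (Fin.rev_le_rev.mpr hij)

theorem sortDesc_comp_perm (v : Fin n → α) (σ : Perm (Fin n)) : sortDesc (v ∘ σ) = sortDesc v := by
  funext i
  exact congrFun (Tuple.comp_perm_comp_sort_eq_comp_sort (f := v) (σ := σ)) i.rev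

theorem sortDesc_eq_ofDual_comp_sortAsc (v : Fin n → α) :
    sortDesc v = ofDual ∘ sortAsc (toDual ∘ v) := by
  have h := (Tuple.comp_sort_eq_comp_iff_monotone (f := toDual ∘ v)
    (σ := Fin.revPerm.trans (Tuple.sort v))).mpr (antitone_sortDesc v).dual_right
  rw [sortAsc, ← h]
  rfl

theorem sum_sortDesc [AddCommMonoid α] (v : Fin n → α) : ∑ i, sortDesc v i = ∑ i, v i := by
  rw [sortDesc_eq_comp_perm]
  exact Equiv.sum_comp _ v

end Sorting

theorem psum_eq_sum_filter [AddCommMonoid α] (f : Fin n → α) (k : ℕ) :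
    psum f k = ∑ i ∈ univ.filter fun i : Fin n => (i : ℕ) < k, f i :=
  (sum_filter _ _).symm

theorem exists_psum_sortDesc_eq_sum [AddCommMonoid α] [LinearOrder α] (v : Fin n → α) (k : ℕ) :
    ∃ s : Finset (Fin n), #s = min n k ∧ psum (sortDesc v) k = ∑ i ∈ s, v i := by
  refine ⟨({i : Fin n | (i : ℕ) < k} : Finset (Fin n)).map
    (Fin.revPerm.trans (Tuple.sort v)).toEmbedding, by rw [card_map, Fin.card_filter_val_lt], ?_⟩
  rw [psum_eq_sum_filter, sum_map]
  rfl

section TopSums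

variable [AddCommMonoid α] [LinearOrder α] [IsOrderedAddMonoid α]

theorem sum_le_psum_of_antitone {w : Fin n → α} (hw : Antitone w) {s : Finset (Fin n)} {k : ℕ}
    (hs : #s = min n k) : ∑ i ∈ s, w i ≤ psum w k := by
  rw [psum_eq_sum_filter]
  rcases lt_or_ge k n with hk | hk
  · refine sum_le_sum_of_card_eq_of_sdiff_le_of_le_sdiff (w ⟨k, hk⟩)
      (by rw [hs, Fin.card_filter_val_lt]) (fun i hi => hw ?_) (fun i hi => hw ?_)
    · simp only [mem_sdiff, mem_filter, mem_univ, true_and, not_lt] at hi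
      exact Fin.le_def.mpr hi.2
    · simp only [mem_sdiff, mem_filter, mem_univ, true_and] at hi
      exact Fin.le_def.mpr hi.1.le
  · have hs_univ : s = univ := eq_univ_of_card s (by rw [hs, Fintype.card_fin]; omega)
    rw [hs_univ, filter_true_of_mem fun i _ => i.2.trans_le hk]

theorem sum_le_psum_sortDesc (v : Fin n → α) {s : Finset (Fin n)} {k : ℕ} (hs : #s = min n k) :
    ∑ i ∈ s, v i ≤ psum (sortDesc v) k := by
  set σ := Fin.revPerm.trans (Tuple.sort v)
  calc ∑ i ∈ s, v i = ∑ i ∈ s.map σ.symm.toEmbedding, sortDesc v i := by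
        simp [sortDesc_eq_comp_perm, σ]
    _ ≤ psum (sortDesc v) k := sum_le_psum_of_antitone (antitone_sortDesc v) (by simpa)

theorem psum_sortDesc_le_of_transfer {u u' : Fin n → α} {i j : Fin n} (hij : i ≠ j)
    (hoff : ∀ l, l ≠ i → l ≠ j → u' l = u l) (hsum : u' i + u' j = u i + u j)
    (hi : u' i ≤ u i) (hj : u' j ≤ u i) (k : ℕ) :
    psum (sortDesc u') k ≤ psum (sortDesc u) k := by
  obtain ⟨s, hs, hs_eq⟩ := exists_psum_sortDesc_eq_sum u' k
  rw [hs_eq]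
  by_cases hjs : j ∈ s
  · by_cases his : i ∈ s
    · have hpair : {i, j} ⊆ s := insert_subset his (singleton_subset_iff.mpr hjs)
      refine le_of_eq_of_le ?_ (sum_le_psum_sortDesc u hs)
      rw [← sum_sdiff hpair, ← sum_sdiff hpair (f := u), sum_pair hij, sum_pair hij, hsum]
      refine congrArg (· + _) (sum_congr rfl fun l hl => ?_)
      simp only [mem_sdiff, mem_insert, mem_singleton, not_or] at hl
      exact hoff l hl.2.1 hl.2.2
    · rw [← sortDesc_comp_perm u (swap i j)]
      refine (sum_le_sum fun l hl => ?_).trans (sum_le_psum_sortDesc _ hs)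
      have hli : l ≠ i := ne_of_mem_of_not_mem hl his
      rcases eq_or_ne l j with rfl | hlj
      · simpa using hj
      · simp [hoff l hli hlj, swap_apply_of_ne_of_ne hli hlj]
  · refine (sum_le_sum fun l hl => ?_).trans (sum_le_psum_sortDesc u hs)
    have hlj : l ≠ j := ne_of_mem_of_not_mem hl hjs
    rcases eq_or_ne l i with rfl | hli
    · exact hi
    · exact (hoff l hli hlj).le

end TopSums

section Group

variable [AddCommGroup α] [LinearOrder α] [IsOrderedAddMonoid α]

theorem psum_sortDesc_sub_comp_swap_le {a w : Fin n → α} (ha : Antitone a) {i j : Fin n}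
    (hij : i < j) (hw : w i ≤ w j) (k : ℕ) :
    psum (sortDesc (a - w ∘ swap i j)) k ≤ psum (sortDesc (a - w)) k :=
  psum_sortDesc_le_of_transfer hij.ne
    (fun l hli hlj => by simp [swap_apply_of_ne_of_ne hli hlj])
    (by simp only [Pi.sub_apply, Function.comp_apply, swap_apply_left, swap_apply_right]; abel)
    (by simpa only [Pi.sub_apply, Function.comp_apply, swap_apply_left] using sub_le_sub_left hw _)
    (by simpa only [Pi.sub_apply, Function.comp_apply, swap_apply_right]
      using sub_le_sub_right (ha hij.le) _) k

theorem psum_sortDesc_sub_sortDesc_le {a : Fin n → α} (ha : Antitone a) (z : Fin n → α)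
    (k : ℕ) : psum (sortDesc (a - sortDesc z)) k ≤ psum (sortDesc (a - z)) k := by
  rw [sortDesc_eq_ofDual_comp_sortAsc z]
  exact Tuple.bubble_sort_induction (f := toDual ∘ z)
    (P := fun g => psum (sortDesc (a - ofDual ∘ g)) k ≤ psum (sortDesc (a - z)) k) le_rfl
    fun g i j hij hg ih => (psum_sortDesc_sub_comp_swap_le ha hij hg.le k).trans ih

end Group

theorem stmt_4 {n : ℕ} (x y : Fin n → ℝ) :
    Maj (fun i => sortDesc x i - sortDesc y i) (fun i => sortDesc x i - y i) :=
  ⟨psum_sortDesc_sub_sortDesc_le (antitone_sortDesc x) y, by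
    simp only [sum_sub_distrib, sum_sortDesc]⟩
end

section
/- Let c ∈ ℕ^n be nonincreasing and t ∈ ℕ^n be nonincreasing. If c is weakly supermajorized by t (c ≺^w t), then there exists x ∈ ℕ^n with x ≺ t and x ≤ c componentwise. -/
open Finset

/-!
Let `T k` and `C k` be the prefix sums of `t` and `c`. Build the prefix sums of `x` greedily,
`X (k + 1) = min (T (k + 1)) (X k + c k)`: each step adds as much as `c k` allows without
overtaking `T`. Then `x ≤ c` and `X ≤ T` hold by construction; supermajorization, read as
"every tail sum of `c` dominates the corresponding tail sum of `t`", forces `X n = T n`; and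
since `c` and `t` are nonincreasing, so are the increments of `X`, so `x` is already sorted and
its partial sums are the `X k`.
-/

section Sorting

variable {n : ℕ} {α : Type*}

lemma sortAsc_of_antitone [LinearOrder α] {f : Fin n → α} (hf : Antitone f) :
    sortAsc f = f ∘ Fin.rev := by
  have hmono : Monotone (f ∘ Fin.revPerm) := fun i j hij => hf (Fin.rev_le_rev.mpr hij)
  exact ((Tuple.comp_sort_eq_comp_iff_monotone (σ := Fin.revPerm)).mpr hmono).symm

lemma sortDesc_of_antitone [LinearOrder α] {f : Fin n → α} (hf : Antitone f) :
    sortDesc f = f := by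
  funext i
  simp [sortDesc, sortAsc_of_antitone hf]

lemma psum_eq_sum_range [AddCommMonoid α] {f : Fin n → α} {g : ℕ → α}
    (hfg : ∀ i : Fin n, g i = f i) (k : ℕ) :
    psum f k = ∑ i ∈ range (min k n), g i := by
  unfold psum
  simp_rw [← hfg]
  rw [Fin.sum_univ_eq_sum_range (fun i => if i < k then g i else 0), ← sum_filter]
  congr 1
  ext i
  simp [and_comm]

lemma psum_comp_rev_eq_sum_Ico [AddCommMonoid α] {f : Fin n → α} {g : ℕ → α}
    (hfg : ∀ i : Fin n, g i = f i) (k : ℕ) :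
    psum (f ∘ Fin.rev) k = ∑ i ∈ Ico (n - k) n, g i := by
  unfold psum
  rw [← Equiv.sum_comp Fin.revPerm]
  have hrev : ∀ i : Fin n, ((Fin.rev i : ℕ) < k ↔ n - k ≤ i) := fun i => by
    simp only [Fin.val_rev]; omega
  simp only [Fin.revPerm_apply, Function.comp_apply, Fin.rev_rev, hrev, ← hfg]
  rw [Fin.sum_univ_eq_sum_range (fun i => if n - k ≤ i then g i else 0), ← sum_filter]
  congr 1
  ext i
  simp [and_comm]

end Sorting

section ZeroExtend

variable {n : ℕ}

def zeroExtend (f : Fin n → ℕ) (i : ℕ) : ℕ :=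
  if h : i < n then f ⟨i, h⟩ else 0

@[simp]
lemma zeroExtend_val (f : Fin n → ℕ) (i : Fin n) : zeroExtend f i = f i := by
  simp [zeroExtend]

lemma Antitone.zeroExtend {f : Fin n → ℕ} (hf : Antitone f) : Antitone (zeroExtend f) := by
  intro i j hij
  unfold _root_.zeroExtend
  by_cases hj : j < n
  · rw [dif_pos hj, dif_pos (hij.trans_lt hj)]
    exact hf (Fin.mk_le_mk.mpr hij)
  · simp [hj]

lemma WeakSuper.sum_Ico_le {c t : Fin n → ℕ} (hc : Antitone c) (ht : Antitone t)
    (h : WeakSuper c t) {j : ℕ} (hj : j ≤ n) :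
    ∑ i ∈ Ico j n, zeroExtend t i ≤ ∑ i ∈ Ico j n, zeroExtend c i := by
  have hk := h (n - j)
  rwa [sortAsc_of_antitone hc, sortAsc_of_antitone ht,
    psum_comp_rev_eq_sum_Ico (zeroExtend_val c), psum_comp_rev_eq_sum_Ico (zeroExtend_val t),
    Nat.sub_sub_self hj] at hk

end ZeroExtend

section Greedy

variable (t c : ℕ → ℕ)

def greedyPrefix : ℕ → ℕ
  | 0 => 0
  | k + 1 => min (∑ i ∈ range (k + 1), t i) (greedyPrefix k + c k)

lemma greedyPrefix_succ (k : ℕ) :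
    greedyPrefix t c (k + 1) = min (∑ i ∈ range (k + 1), t i) (greedyPrefix t c k + c k) :=
  rfl

lemma greedyPrefix_le_sum : ∀ k, greedyPrefix t c k ≤ ∑ i ∈ range k, t i
  | 0 => le_rfl
  | _ + 1 => min_le_left _ _

lemma greedyPrefix_succ_le (k : ℕ) : greedyPrefix t c (k + 1) ≤ greedyPrefix t c k + c k :=
  min_le_right _ _

lemma greedyPrefix_monotone : Monotone (greedyPrefix t c) := by
  refine monotone_nat_of_le_succ fun k => ?_
  rw [greedyPrefix_succ, sum_range_succ]
  exact le_min ((greedyPrefix_le_sum t c k).trans le_self_add) le_self_add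

lemma sum_range_greedyPrefix_sub (k : ℕ) :
    ∑ i ∈ range k, (greedyPrefix t c (i + 1) - greedyPrefix t c i) = greedyPrefix t c k :=
  sum_range_tsub (greedyPrefix_monotone t c) k

/-- If `X (k + 1) = T (k + 1)`, the increment `x (k + 1) ≤ t (k + 1) ≤ t k ≤ x k`;
otherwise `x k = c k ≥ c (k + 1) ≥ x (k + 1)`. -/
lemma antitone_greedyPrefix_sub (ht : Antitone t) (hc : Antitone c) :
    Antitone fun k => greedyPrefix t c (k + 1) - greedyPrefix t c k := by
  refine antitone_nat_of_succ_le fun k => ?_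
  show greedyPrefix t c (k + 2) - greedyPrefix t c (k + 1) ≤
    greedyPrefix t c (k + 1) - greedyPrefix t c k
  have hX := min_choice (∑ i ∈ range (k + 1), t i) (greedyPrefix t c k + c k)
  rw [← greedyPrefix_succ, sum_range_succ] at hX
  have hXT := greedyPrefix_le_sum t c k
  have hXT' := greedyPrefix_le_sum t c (k + 2)
  have hXc' : greedyPrefix t c (k + 2) ≤ greedyPrefix t c (k + 1) + c (k + 1) :=
    greedyPrefix_succ_le t c (k + 1)
  have hmono : greedyPrefix t c (k + 1) ≤ greedyPrefix t c (k + 2) :=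
    greedyPrefix_monotone t c (by omega)
  have ht' : t (k + 1) ≤ t k := ht (by omega)
  have hc' : c (k + 1) ≤ c k := hc (by omega)
  rw [sum_range_succ, sum_range_succ] at hXT'
  omega

/-- Tail domination `∑_{j ≤ i < n} t i ≤ ∑_{j ≤ i < n} c i` propagates, by induction on `k`,
to `T n + C k ≤ X k + C n`; at `k = n` this is `T n ≤ X n`. -/
lemma greedyPrefix_eq_sum {n : ℕ} (htail : ∀ j ≤ n, ∑ i ∈ Ico j n, t i ≤ ∑ i ∈ Ico j n, c i) :
    greedyPrefix t c n = ∑ i ∈ range n, t i := by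
  have hprefix : ∀ j ≤ n,
      ∑ i ∈ range j, c i + ∑ i ∈ range n, t i ≤ ∑ i ∈ range j, t i + ∑ i ∈ range n, c i :=
    fun j hj => by
      have := htail j hj
      rw [← sum_range_add_sum_Ico t hj, ← sum_range_add_sum_Ico c hj]
      omega
  have hlower : ∀ k ≤ n,
      ∑ i ∈ range n, t i + ∑ i ∈ range k, c i ≤ greedyPrefix t c k + ∑ i ∈ range n, c i := by
    intro k hk
    induction k with
    | zero => simpa [greedyPrefix] using hprefix 0 (Nat.zero_le n)
    | succ k ih =>
      have := ih (Nat.le_of_succ_le hk)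
      have := hprefix (k + 1) hk
      have hX := min_choice (∑ i ∈ range (k + 1), t i) (greedyPrefix t c k + c k)
      rw [← greedyPrefix_succ] at hX
      have := sum_range_succ c k
      omega
  have := hlower n le_rfl
  have := greedyPrefix_le_sum t c n
  omega

end Greedy

theorem stmt_10 {n : ℕ} (c t : Fin n → ℕ) (hc : Antitone c) (ht : Antitone t)
    (h : WeakSuper c t) :
    ∃ x : Fin n → ℕ, Maj x t ∧ x ≤ c := by
  set X := greedyPrefix (zeroExtend t) (zeroExtend c)
  have hx : Antitone fun i : Fin n => X (i + 1) - X i := fun _ _ hij =>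
    antitone_greedyPrefix_sub _ _ ht.zeroExtend hc.zeroExtend hij
  refine ⟨fun i => X (i + 1) - X i, ⟨fun k => ?_, ?_⟩, fun i => ?_⟩
  · rw [sortDesc_of_antitone hx, sortDesc_of_antitone ht,
      psum_eq_sum_range (g := fun i => X (i + 1) - X i) fun _ => rfl,
      psum_eq_sum_range (zeroExtend_val t), sum_range_greedyPrefix_sub]
    exact greedyPrefix_le_sum _ _ _
  · rw [Fin.sum_univ_eq_sum_range (fun i => X (i + 1) - X i), sum_range_greedyPrefix_sub,
      greedyPrefix_eq_sum _ _ fun j hj => h.sum_Ico_le hc ht hj]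
    simp_rw [← zeroExtend_val t]
    exact (Fin.sum_univ_eq_sum_range _ n).symm
  · have := greedyPrefix_succ_le (zeroExtend t) (zeroExtend c) i
    simp only [zeroExtend_val] at this
    exact Nat.sub_le_iff_le_add'.mpr this
end

section
/- For τ ∈ ℕ, let N_τ be the set of nonincreasing vectors in ℕ^n with total sum τ, partially ordered by majorization. For any x, y ∈ N_τ, the vector z defined recursively by partial sums S_k(z) = min{S_k(x), S_k(y)} (where S_k denotes the sum of the first k entries) is an element of N_τ and is the infimum of {x, y} in (N_τ, ≺). -/
open Finset

/-- Dominance order for (sorted) vectors: all leading partial sums compare. -/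
def Dom {n : ℕ} (x y : Fin n → ℕ) : Prop :=
  ∀ k : ℕ, psum x k ≤ psum y k

/-- The candidate meet, defined via componentwise minima of leading partial sums. -/
def meetP {n : ℕ} (x y : Fin n → ℕ) : Fin n → ℕ :=
  fun k => min (psum x ((k : ℕ) + 1)) (psum y ((k : ℕ) + 1))
      - min (psum x (k : ℕ)) (psum y (k : ℕ))

/-!
The partial sums `k ↦ S_k(x)` of a nonincreasing vector form a concave function on `ℕ`, and the
pointwise minimum `M k = min (S_k x) (S_k y)` of two concave functions is concave. Hence the
increments `z_k = M (k + 1) - M k` are nonincreasing, and they telescope to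
`S_k(z) = M k` (for `k ≤ n`). This identity gives `z ≺ x`, `z ≺ y` and the greatest-lower-bound
property at once.
-/

/-- Midpoint concavity, stated additively to avoid truncated subtraction. -/
def DiscreteConcave (g : ℕ → ℕ) : Prop :=
  ∀ k, g k + g (k + 2) ≤ g (k + 1) + g (k + 1)

section psum

variable {n : ℕ}

lemma psum_zero {α : Type*} [AddCommMonoid α] (f : Fin n → α) : psum f 0 = 0 := by
  simp [psum]

lemma psum_succ {α : Type*} [AddCommMonoid α] (f : Fin n → α) (k : ℕ) :
    psum f (k + 1) = psum f k + if h : k < n then f ⟨k, h⟩ else 0 := by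
  have hsplit : ∀ i : Fin n, (if (i : ℕ) < k + 1 then f i else 0)
      = (if (i : ℕ) < k then f i else 0) + if (i : ℕ) = k then f i else 0 := by
    intro i
    split_ifs <;> first | omega | simp
  rw [psum, psum, Finset.sum_congr rfl fun i _ => hsplit i, Finset.sum_add_distrib]
  congr 1
  split_ifs with h
  · simp [← Fin.ext_iff (b := ⟨k, h⟩)]
  · exact Finset.sum_eq_zero fun i _ => if_neg (by omega)

lemma psum_min_length {α : Type*} [AddCommMonoid α] (f : Fin n → α) (k : ℕ) :
    psum f (min k n) = psum f k :=
  Finset.sum_congr rfl fun i _ => by simp [i.isLt]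

lemma psum_length {α : Type*} [AddCommMonoid α] (f : Fin n → α) :
    psum f n = ∑ i, f i :=
  Finset.sum_congr rfl fun i _ => if_pos i.isLt

lemma psum_mono_s13 (f : Fin n → ℕ) : Monotone (psum f) := fun _ _ hab =>
  Finset.sum_le_sum fun _ _ => by split_ifs <;> omega

lemma discreteConcave_psum {f : Fin n → ℕ} (hf : Antitone f) : DiscreteConcave (psum f) := by
  intro k
  have hstep :
      (if h : k + 1 < n then f ⟨k + 1, h⟩ else 0) ≤ if h : k < n then f ⟨k, h⟩ else 0 := by
    split_ifs with h₁ h₀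
    · exact hf (Fin.mk_le_mk.mpr k.le_succ)
    · omega
    · exact Nat.zero_le _
    · exact le_rfl
  have h₁ : psum f (k + 1) = psum f k + _ := psum_succ f k
  have h₂ : psum f (k + 2) = psum f (k + 1) + _ := psum_succ f (k + 1)
  omega

lemma psum_increments {g : ℕ → ℕ} (hg : Monotone g) (hg0 : g 0 = 0) (k : ℕ) :
    psum (fun i : Fin n => g (i + 1) - g i) k = g (min k n) := by
  induction k with
  | zero => simp [psum_zero, hg0]
  | succ k ih =>
    rw [psum_succ, ih]
    split_ifs with h
    · have := hg (Nat.le_add_right k 1)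
      rw [min_eq_left h.le, min_eq_left h, Fin.val_mk]
      omega
    · rw [min_eq_right (by omega), min_eq_right (by omega), add_zero]

end psum

lemma DiscreteConcave.min {g h : ℕ → ℕ} (hg : DiscreteConcave g) (hh : DiscreteConcave h) :
    DiscreteConcave fun k => min (g k) (h k) := by
  intro k
  have := hg k
  have := hh k
  simp only [min_def]
  split_ifs <;> omega

lemma DiscreteConcave.antitone_increments {g : ℕ → ℕ} (hc : DiscreteConcave g)
    (hg : Monotone g) : Antitone fun k => g (k + 1) - g k := by
  refine antitone_nat_of_succ_le fun k => ?_
  have : g k + g (k + 1 + 1) ≤ g (k + 1) + g (k + 1) := hc k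
  have := hg (Nat.le_add_right k 1)
  have := hg (Nat.le_add_right (k + 1) 1)
  omega

theorem stmt_13 {n τ : ℕ} (x y : Fin n → ℕ)
    (hx : Antitone x) (hy : Antitone y)
    (hxs : ∑ i, x i = τ) (hys : ∑ i, y i = τ) :
    Antitone (meetP x y) ∧ (∑ i, meetP x y i = τ) ∧
      Dom (meetP x y) x ∧ Dom (meetP x y) y ∧
      ∀ w : Fin n → ℕ, Antitone w → (∑ i, w i = τ) →
        Dom w x → Dom w y → Dom w (meetP x y) := by
  have hmono : Monotone fun k => min (psum x k) (psum y k) :=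
    fun _ _ hab => min_le_min (psum_mono_s13 x hab) (psum_mono_s13 y hab)
  have hconc : DiscreteConcave fun k => min (psum x k) (psum y k) :=
    (discreteConcave_psum hx).min (discreteConcave_psum hy)
  have hpsum (k : ℕ) :
      psum (meetP x y) k = min (psum x (min k n)) (psum y (min k n)) :=
    psum_increments hmono (by simp [psum_zero]) k
  refine ⟨fun i j hij => hconc.antitone_increments hmono (Fin.le_iff_val_le_val.mp hij), ?_,
    fun k => ?_, fun k => ?_, fun w _ _ hwx hwy k => ?_⟩
  · rw [← psum_length, hpsum, min_self, psum_length, psum_length, hxs, hys, min_self]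
  · exact (hpsum k).trans_le ((min_le_left _ _).trans_eq (psum_min_length x k))
  · exact (hpsum k).trans_le ((min_le_right _ _).trans_eq (psum_min_length y k))
  · exact (psum_min_length w k).symm.trans_le ((le_min (hwx _) (hwy _)).trans_eq (hpsum k).symm)
end
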